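/- arXiv:1206.4968 — 2 statements merged into one kernel-verified Lean document; each statement's English description precedes it below -/
import Mathlib

section
/- Let D ⊆ ℝⁿ be an open set, f : D → ℝⁿ a continuous vector field, and θ* a point in the closure of D. Suppose there exists a continuously differentiable function V : ℝⁿ → ℝ and a strictly increasing continuous function α : ℝ₊ → ℝ₊ with α(p) → ∞ as p → ∞ such that V(θ*) = 0, V(θ) ≥ α(‖θ − θ*‖) for all θ ∈ D \ {θ*}, and ∇V(θ)ᵀ f(θ) < 0 for all θ ∈ D \ {θ*}. Suppose further that for any 0 < r₁ ≤ r₂, any solution of θ' = f(θ) that remains in the annulus D_{r₁,r₂} = {θ ∈ D : r₁ ≤ ‖θ − θ*‖ ≤ r₂} for all t ≥ 0 eventually enters and stays in some compact subset E ⊆ D_{r₁,r₂}. Then θ* is globally asymptotically stable: it is Lyapunov stable and every solution starting in D converges to θ* as t → ∞. -/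
/-!
Along any solution `θ`, `V ∘ θ` is nonincreasing, and the comparison `α ‖θ - θ*‖ ≤ V θ` turns
every bound `V (θ s) < α ε` into `‖θ t - θ*‖ < ε` for all `t ≥ s`. Stability follows from the
continuity of `V` at `θ*`. For attraction it suffices that `V ∘ θ` drops below every `L > 0`:
otherwise `θ` stays in an annulus (its inner radius given by continuity of `V` at `θ*`, its outer
one by `α → ∞`), hence eventually in a compact subset of `D \ {θ*}`, on which `∇V ⬝ f` is bounded
by some `-c < 0`; then `V ∘ θ` decreases at rate at least `c` forever, contradicting `V ≥ 0`.
-/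

open Set Filter Topology Metric

/-- A solution of `θ' = f(θ)` on `[0, ∞)` staying in the open set `D`. -/
def IsSolIn {n : ℕ} (f : EuclideanSpace ℝ (Fin n) → EuclideanSpace ℝ (Fin n))
    (D : Set (EuclideanSpace ℝ (Fin n))) (θ : ℝ → EuclideanSpace ℝ (Fin n)) : Prop :=
  (∀ t : ℝ, 0 ≤ t → θ t ∈ D) ∧ ∀ t : ℝ, 0 ≤ t → HasDerivAt θ (f (θ t)) t

section Lyapunov

variable {n : ℕ} {D : Set (EuclideanSpace ℝ (Fin n))}
  {f : EuclideanSpace ℝ (Fin n) → EuclideanSpace ℝ (Fin n)}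
  {V : EuclideanSpace ℝ (Fin n) → ℝ} {θstar : EuclideanSpace ℝ (Fin n)} {α : ℝ → ℝ}

theorem lyapunov_nonneg (hαpos : ∀ p : ℝ, 0 < p → 0 < α p) (hV0 : V θstar = 0)
    (hVpos : ∀ θ ∈ D \ {θstar}, α ‖θ - θstar‖ ≤ V θ) {x : EuclideanSpace ℝ (Fin n)}
    (hx : x ∈ D) : 0 ≤ V x := by
  rcases eq_or_ne x θstar with rfl | hne
  · exact hV0.ge
  · exact (hαpos _ (norm_sub_pos_iff.mpr hne)).le.trans (hVpos x ⟨hx, hne⟩)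

theorem lyapunov_fderiv_apply_nonpos (hD : IsOpen D) (hVnn : ∀ x ∈ D, 0 ≤ V x)
    (hV0 : V θstar = 0) (hVdec : ∀ θ ∈ D \ {θstar}, fderiv ℝ V θ (f θ) < 0)
    {x : EuclideanSpace ℝ (Fin n)} (hx : x ∈ D) : fderiv ℝ V x (f x) ≤ 0 := by
  rcases eq_or_ne x θstar with rfl | hne
  · have hmin : IsLocalMin V x :=
      mem_of_superset (hD.mem_nhds hx) fun y hy => by simpa [hV0] using hVnn y hy
    simp [hmin.fderiv_eq_zero]
  · exact (hVdec x ⟨hx, hne⟩).le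

theorem norm_sub_lt_of_lyapunov_lt (hαmono : MonotoneOn α (Ici 0))
    (hVpos : ∀ θ ∈ D \ {θstar}, α ‖θ - θstar‖ ≤ V θ) {ε : ℝ} (hε : 0 < ε)
    {x : EuclideanSpace ℝ (Fin n)} (hx : x ∈ D) (hVx : V x < α ε) : ‖x - θstar‖ < ε := by
  by_contra! h
  have hne : x ≠ θstar := norm_sub_pos_iff.mp (hε.trans_le h)
  linarith [hαmono hε.le (norm_nonneg (x - θstar)) h, hVpos x ⟨hx, hne⟩]

namespace IsSolIn

variable {θ : ℝ → EuclideanSpace ℝ (Fin n)}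

theorem hasDerivAt_comp (hθ : IsSolIn f D θ) (hV : Differentiable ℝ V) {t : ℝ} (ht : 0 ≤ t) :
    HasDerivAt (V ∘ θ) (fderiv ℝ V (θ t) (f (θ t))) t :=
  (hV (θ t)).hasFDerivAt.comp_hasDerivAt t (hθ.2 t ht)

theorem comp_sub_le_mul_sub (hθ : IsSolIn f D θ) (hV : Differentiable ℝ V) {T C : ℝ}
    (hT : 0 ≤ T) (hC : ∀ t, T ≤ t → fderiv ℝ V (θ t) (f (θ t)) ≤ C) {s t : ℝ} (hs : T ≤ s)
    (hst : s ≤ t) : V (θ t) - V (θ s) ≤ C * (t - s) := by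
  have hderiv : ∀ t ∈ Ici T, HasDerivAt (V ∘ θ) (fderiv ℝ V (θ t) (f (θ t))) t :=
    fun t ht => hθ.hasDerivAt_comp hV (hT.trans ht)
  refine (convex_Ici T).image_sub_le_mul_sub_of_deriv_le
    (fun t ht => (hderiv t ht).continuousAt.continuousWithinAt)
    (fun t ht => (hderiv t (interior_subset ht)).differentiableAt.differentiableWithinAt)
    (fun t ht => ?_) s hs t (hs.trans hst) hst
  rw [(hderiv t (interior_subset ht)).deriv]
  exact hC t (interior_subset ht)

theorem antitoneOn_comp (hθ : IsSolIn f D θ) (hV : Differentiable ℝ V)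
    (hVf : ∀ x ∈ D, fderiv ℝ V x (f x) ≤ 0) : AntitoneOn (V ∘ θ) (Ici 0) := by
  intro s hs t _ hst
  have := hθ.comp_sub_le_mul_sub hV le_rfl (fun t ht => hVf _ (hθ.1 t ht)) hs hst
  simp only [Function.comp_apply]
  linarith

theorem norm_sub_lt_of_lyapunov_lt (hθ : IsSolIn f D θ) (hV : Differentiable ℝ V)
    (hVf : ∀ x ∈ D, fderiv ℝ V x (f x) ≤ 0) (hαmono : MonotoneOn α (Ici 0))
    (hVpos : ∀ θ ∈ D \ {θstar}, α ‖θ - θstar‖ ≤ V θ) {ε s t : ℝ} (hε : 0 < ε) (hs : 0 ≤ s)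
    (hVs : V (θ s) < α ε) (hst : s ≤ t) : ‖θ t - θstar‖ < ε :=
  _root_.norm_sub_lt_of_lyapunov_lt hαmono hVpos hε (hθ.1 t (hs.trans hst))
    ((hθ.antitoneOn_comp hV hVf hs (hs.trans hst) hst).trans_lt hVs)

theorem false_of_forall_ge_mem_compact (hθ : IsSolIn f D θ) (hV : ContDiff ℝ 1 V)
    (hf : ContinuousOn f D) (hVnn : ∀ x ∈ D, 0 ≤ V x) {E : Set (EuclideanSpace ℝ (Fin n))}
    (hE : IsCompact E) (hED : E ⊆ D) (hEneg : ∀ x ∈ E, fderiv ℝ V x (f x) < 0) {T : ℝ}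
    (hT : 0 ≤ T) (hTE : ∀ t, T ≤ t → θ t ∈ E) : False := by
  have hcont : ContinuousOn (fun x => fderiv ℝ V x (f x)) E :=
    ((hV.continuous_fderiv one_ne_zero).continuousOn.clm_apply hf).mono hED
  obtain ⟨x₀, hx₀, hmax⟩ := hE.exists_isMaxOn ⟨θ T, hTE T le_rfl⟩ hcont
  set c := -fderiv ℝ V x₀ (f x₀)
  have hc : 0 < c := neg_pos.mpr (hEneg x₀ hx₀)
  have hVT := hVnn _ (hθ.1 T hT)
  set t := T + (V (θ T) + 1) / c
  have hTt : T ≤ t := le_add_of_nonneg_right (div_nonneg (by linarith) hc.le)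
  have hdecay := hθ.comp_sub_le_mul_sub (hV.differentiable one_ne_zero) hT
    (fun t ht => hmax (hTE t ht)) le_rfl hTt
  have hdrop : -c * (t - T) = -(V (θ T) + 1) := by
    simp only [t, add_sub_cancel_left]
    field_simp
  linarith [hVnn _ (hθ.1 t (hT.trans hTt))]

theorem exists_lyapunov_lt (hθ : IsSolIn f D θ) (hV : ContDiff ℝ 1 V) (hf : ContinuousOn f D)
    (hVnn : ∀ x ∈ D, 0 ≤ V x) (hVf : ∀ x ∈ D, fderiv ℝ V x (f x) ≤ 0) (hV0 : V θstar = 0)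
    (hαmono : MonotoneOn α (Ici 0)) (hαinf : Tendsto α atTop atTop)
    (hVpos : ∀ θ ∈ D \ {θstar}, α ‖θ - θstar‖ ≤ V θ)
    (hVdec : ∀ θ ∈ D \ {θstar}, fderiv ℝ V θ (f θ) < 0)
    (hA3 : ∀ r₁ r₂ : ℝ, 0 < r₁ → r₁ ≤ r₂ →
      ∀ θ : ℝ → EuclideanSpace ℝ (Fin n), IsSolIn f D θ →
        (∀ t : ℝ, 0 ≤ t → θ t ∈ {x ∈ D | r₁ ≤ ‖x - θstar‖ ∧ ‖x - θstar‖ ≤ r₂}) →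
        ∃ T : ℝ, 0 ≤ T ∧ ∃ E : Set (EuclideanSpace ℝ (Fin n)), IsCompact E ∧
          E ⊆ {x ∈ D | r₁ ≤ ‖x - θstar‖ ∧ ‖x - θstar‖ ≤ r₂} ∧
          ∀ t : ℝ, T ≤ t → θ t ∈ E)
    {L : ℝ} (hL : 0 < L) : ∃ t, 0 ≤ t ∧ V (θ t) < L := by
  have hVd := hV.differentiable one_ne_zero
  by_contra! hge
  have hVθstar : ∀ᶠ x in 𝓝 θstar, V x < L :=
    (hVd.continuous.tendsto θstar).eventually_lt_const (hV0 ▸ hL)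
  obtain ⟨r₁, hr₁, hball⟩ := Metric.eventually_nhds_iff.mp hVθstar
  have hinner : ∀ t, 0 ≤ t → r₁ ≤ ‖θ t - θstar‖ := fun t ht => by
    by_contra! h
    exact (hge t ht).not_gt (hball (by rwa [dist_eq_norm]))
  obtain ⟨R, hR⟩ := (hαinf.eventually_gt_atTop (V (θ 0))).exists_forall_of_atTop
  set r₂ := max R r₁
  have hr₂ : 0 < r₂ := hr₁.trans_le (le_max_right R r₁)
  have houter : ∀ t, 0 ≤ t → ‖θ t - θstar‖ ≤ r₂ := fun t ht =>
    (hθ.norm_sub_lt_of_lyapunov_lt hVd hVf hαmono hVpos hr₂ le_rfl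
      (hR r₂ (le_max_left R r₁)) ht).le
  obtain ⟨T, hT, E, hE, hEsub, hTE⟩ := hA3 r₁ r₂ hr₁ (le_max_right R r₁) θ hθ
    fun t ht => ⟨hθ.1 t ht, hinner t ht, houter t ht⟩
  refine hθ.false_of_forall_ge_mem_compact hV hf hVnn hE (fun x hx => (hEsub hx).1)
    (fun x hx => hVdec x ⟨(hEsub hx).1, ?_⟩) hT hTE
  exact norm_sub_pos_iff.mp (hr₁.trans_le (hEsub hx).2.1)

end IsSolIn

end Lyapunov

theorem extended_lyapunov_global_general {n : ℕ}
    (D : Set (EuclideanSpace ℝ (Fin n))) (hD : IsOpen D)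
    (f : EuclideanSpace ℝ (Fin n) → EuclideanSpace ℝ (Fin n))
    (θstar : EuclideanSpace ℝ (Fin n))
    (hf : ContinuousOn f D)
    (V : EuclideanSpace ℝ (Fin n) → ℝ) (hV : ContDiff ℝ 1 V)
    (α : ℝ → ℝ) (hαmono : StrictMonoOn α (Ici 0))
    (hαpos : ∀ p : ℝ, 0 < p → 0 < α p) (hαinf : Tendsto α atTop atTop)
    (hV0 : V θstar = 0)
    (hVpos : ∀ θ ∈ D \ {θstar}, α ‖θ - θstar‖ ≤ V θ)
    (hVdec : ∀ θ ∈ D \ {θstar}, fderiv ℝ V θ (f θ) < 0)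
    (hA3 : ∀ r₁ r₂ : ℝ, 0 < r₁ → r₁ ≤ r₂ →
      ∀ θ : ℝ → EuclideanSpace ℝ (Fin n), IsSolIn f D θ →
        (∀ t : ℝ, 0 ≤ t → θ t ∈ {x ∈ D | r₁ ≤ ‖x - θstar‖ ∧ ‖x - θstar‖ ≤ r₂}) →
        ∃ T : ℝ, 0 ≤ T ∧ ∃ E : Set (EuclideanSpace ℝ (Fin n)), IsCompact E ∧
          E ⊆ {x ∈ D | r₁ ≤ ‖x - θstar‖ ∧ ‖x - θstar‖ ≤ r₂} ∧
          ∀ t : ℝ, T ≤ t → θ t ∈ E) :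
    -- Lyapunov stability
    (∀ ε : ℝ, 0 < ε → ∃ δ : ℝ, 0 < δ ∧
      ∀ θ : ℝ → EuclideanSpace ℝ (Fin n), IsSolIn f D θ →
        θ 0 ∈ D ∩ closedBall θstar δ →
        ∀ t : ℝ, 0 ≤ t → θ t ∈ D ∩ closedBall θstar ε) ∧
    -- global attraction
    (∀ θ : ℝ → EuclideanSpace ℝ (Fin n), IsSolIn f D θ →
      Tendsto θ atTop (nhds θstar)) := by
  have hVd := hV.differentiable one_ne_zero
  have hVnn : ∀ x ∈ D, 0 ≤ V x := fun x => lyapunov_nonneg hαpos hV0 hVpos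
  have hVf : ∀ x ∈ D, fderiv ℝ V x (f x) ≤ 0 := fun x =>
    lyapunov_fderiv_apply_nonpos hD hVnn hV0 hVdec
  refine ⟨fun ε hε => ?_, fun θ hθ => Metric.tendsto_atTop.2 fun ε hε => ?_⟩
  · have hVθstar : ∀ᶠ x in 𝓝 θstar, V x < α ε :=
      (hVd.continuous.tendsto θstar).eventually_lt_const (hV0 ▸ hαpos ε hε)
    obtain ⟨δ, hδ, hball⟩ := Metric.eventually_nhds_iff.mp hVθstar
    refine ⟨δ / 2, half_pos hδ, fun θ hθ h0 t ht => ⟨hθ.1 t ht, ?_⟩⟩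
    have hV0ε : V (θ 0) < α ε := hball ((mem_closedBall.mp h0.2).trans_lt (half_lt_self hδ))
    rw [mem_closedBall, dist_eq_norm]
    exact (hθ.norm_sub_lt_of_lyapunov_lt hVd hVf hαmono.monotoneOn hVpos hε le_rfl hV0ε ht).le
  · obtain ⟨s, hs, hVs⟩ := hθ.exists_lyapunov_lt hV hf hVnn hVf hV0 hαmono.monotoneOn hαinf
      hVpos hVdec hA3 (hαpos ε hε)
    refine ⟨s, fun t hst => ?_⟩
    rw [dist_eq_norm]
    exact hθ.norm_sub_lt_of_lyapunov_lt hVd hVf hαmono.monotoneOn hVpos hε hs hVs hst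

/-- **Extended Lyapunov stability method (global version).**
If there is a continuously differentiable Lyapunov function `V`, positive away from `θ*`
(bounded below by a strictly increasing radially unbounded `α` of the distance) and strictly
decreasing along the vector field on `D \ {θ*}`, and if any solution remaining forever in an
annulus around `θ*` eventually stays in a compact subset of the annulus, then `θ*` is
globally asymptotically stable: it is Lyapunov stable and every solution starting in `D`
converges to `θ*`. -/
theorem extended_lyapunov_global {n : ℕ}
    (D : Set (EuclideanSpace ℝ (Fin n))) (hD : IsOpen D)
    (f : EuclideanSpace ℝ (Fin n) → EuclideanSpace ℝ (Fin n))
    (θstar : EuclideanSpace ℝ (Fin n)) (hθstar : θstar ∈ closure D)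
    (hf : ContinuousOn f D)
    (V : EuclideanSpace ℝ (Fin n) → ℝ) (hV : ContDiff ℝ 1 V)
    (α : ℝ → ℝ) (hαmono : StrictMonoOn α (Ici 0)) (hαcont : ContinuousOn α (Ici 0))
    (hαpos : ∀ p : ℝ, 0 < p → 0 < α p) (hαinf : Tendsto α atTop atTop)
    (hV0 : V θstar = 0)
    (hVpos : ∀ θ ∈ D \ {θstar}, α ‖θ - θstar‖ ≤ V θ)
    (hVdec : ∀ θ ∈ D \ {θstar}, fderiv ℝ V θ (f θ) < 0)
    (hA3 : ∀ r₁ r₂ : ℝ, 0 < r₁ → r₁ ≤ r₂ →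
      ∀ θ : ℝ → EuclideanSpace ℝ (Fin n), IsSolIn f D θ →
        (∀ t : ℝ, 0 ≤ t → θ t ∈ {x ∈ D | r₁ ≤ ‖x - θstar‖ ∧ ‖x - θstar‖ ≤ r₂}) →
        ∃ T : ℝ, 0 ≤ T ∧ ∃ E : Set (EuclideanSpace ℝ (Fin n)), IsCompact E ∧
          E ⊆ {x ∈ D | r₁ ≤ ‖x - θstar‖ ∧ ‖x - θstar‖ ≤ r₂} ∧
          ∀ t : ℝ, T ≤ t → θ t ∈ E) :
    -- Lyapunov stability
    (∀ ε : ℝ, 0 < ε → ∃ δ : ℝ, 0 < δ ∧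
      ∀ θ : ℝ → EuclideanSpace ℝ (Fin n), IsSolIn f D θ →
        θ 0 ∈ D ∩ closedBall θstar δ →
        ∀ t : ℝ, 0 ≤ t → θ t ∈ D ∩ closedBall θstar ε) ∧
    -- global attraction
    (∀ θ : ℝ → EuclideanSpace ℝ (Fin n), IsSolIn f D θ →
      Tendsto θ atTop (nhds θstar)) :=
  extended_lyapunov_global_general D hD f θstar hf V hV α hαmono hαpos hαinf hV0 hVpos hVdec hA3
end

section
/- Consider the planar ODE dθ₁/dt = −θ₁/√(θ₁² + θ₂²), dθ₂/dt = −θ₂ on the domain D = ℝ × ℝ₊ (so the vector field is defined away from the origin). Then along any solution, |θ₁(t)| and θ₂(t) are monotonically non-increasing and converge to 0, so the origin (0,0) ∈ ∂D is globally asymptotically stable; however, lim_{θ→(0,0)} of the vector field does not exist. -/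
/-!
The second equation gives `θ₂(t) ≤ θ₂(0) e^{-t}`. For the first, `(θ₁²)' = -2θ₁²/|θ|`, and since
`|θ₁|` and `θ₂` both decrease, `|θ(t)| ≤ |θ(0)| =: R`, so `θ₁²` decays at least like `e^{-2t/R}`.
The same monotonicity makes the sup-distance to the origin non-increasing, which is Lyapunov
stability with `δ = ε`. On the ray `s ↦ (a s, s)` the first component of the field is the constant
`-a/√(a²+1)`, so the field has different limits along different rays.
-/

open Set Filter Topology Metric

/-- The planar vector field `F(θ₁,θ₂) = (−θ₁/√(θ₁²+θ₂²), −θ₂)`. -/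
noncomputable def planarField (p : ℝ × ℝ) : ℝ × ℝ :=
  (-p.1 / Real.sqrt (p.1 ^ 2 + p.2 ^ 2), -p.2)

/-- The domain `D = ℝ × ℝ₊`. -/
def upperHalf : Set (ℝ × ℝ) := {p : ℝ × ℝ | 0 < p.2}

/-- A solution of the planar ODE on `[0, ∞)` staying in `D`. -/
def IsPlanarSol (θ : ℝ → ℝ × ℝ) : Prop :=
  (∀ t : ℝ, 0 ≤ t → θ t ∈ upperHalf) ∧
    ∀ t : ℝ, 0 ≤ t → HasDerivAt θ (planarField (θ t)) t

open Real

theorem antitoneOn_Ici_of_hasDerivAt_nonpos {f f' : ℝ → ℝ} {a : ℝ}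
    (hf : ∀ t ∈ Ici a, HasDerivAt f (f' t) t) (hf' : ∀ t ∈ Ici a, f' t ≤ 0) :
    AntitoneOn f (Ici a) :=
  antitoneOn_of_hasDerivWithinAt_nonpos (convex_Ici a)
    (fun t ht => (hf t ht).continuousAt.continuousWithinAt)
    (fun t ht => (hf t (interior_subset ht)).hasDerivWithinAt)
    (fun t ht => hf' t (interior_subset ht))

theorem le_mul_exp_neg_of_hasDerivAt_le_neg_mul {f f' : ℝ → ℝ} {c : ℝ}
    (hf : ∀ t ∈ Ici (0 : ℝ), HasDerivAt f (f' t) t) (hf' : ∀ t ∈ Ici (0 : ℝ), f' t ≤ -c * f t)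
    {t : ℝ} (ht : 0 ≤ t) : f t ≤ f 0 * exp (-(c * t)) := by
  have hg : AntitoneOn (fun s => f s * exp (c * s)) (Ici 0) := by
    refine antitoneOn_Ici_of_hasDerivAt_nonpos
      (f' := fun s => exp (c * s) * (f' s + c * f s)) (fun s hs => ?_) (fun s hs => ?_)
    · exact ((hf s hs).mul ((hasDerivAt_id s).const_mul c).exp).congr_deriv
        (by simp only [id, mul_one]; ring)
    · exact mul_nonpos_of_nonneg_of_nonpos (exp_pos _).le (by linarith [hf' s hs])
  have h := hg self_mem_Ici ht ht
  simp only [mul_zero, exp_zero, mul_one] at h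
  rwa [exp_neg, ← div_eq_mul_inv, le_div_iff₀ (exp_pos _)]

theorem tendsto_zero_of_hasDerivAt_le_neg_mul {f f' : ℝ → ℝ} {c : ℝ} (hc : 0 < c)
    (hf₀ : ∀ t ∈ Ici (0 : ℝ), 0 ≤ f t)
    (hf : ∀ t ∈ Ici (0 : ℝ), HasDerivAt f (f' t) t) (hf' : ∀ t ∈ Ici (0 : ℝ), f' t ≤ -c * f t) :
    Tendsto f atTop (𝓝 0) := by
  have hexp : Tendsto (fun t => f 0 * exp (-(c * t))) atTop (𝓝 0) := by
    simpa using (tendsto_exp_neg_atTop_nhds_zero.comp (tendsto_id.const_mul_atTop hc)).const_mul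
      (f 0)
  exact tendsto_of_tendsto_of_tendsto_of_le_of_le' tendsto_const_nhds hexp
    ((eventually_ge_atTop 0).mono hf₀)
    ((eventually_ge_atTop 0).mono fun t ht => le_mul_exp_neg_of_hasDerivAt_le_neg_mul hf hf' ht)

namespace IsPlanarSol

variable {θ : ℝ → ℝ × ℝ} {t : ℝ}

theorem snd_pos (hθ : IsPlanarSol θ) (ht : 0 ≤ t) : 0 < (θ t).2 :=
  hθ.1 t ht

theorem hasDerivAt_fst (hθ : IsPlanarSol θ) (ht : 0 ≤ t) :
    HasDerivAt (fun s => (θ s).1) (-(θ t).1 / √((θ t).1 ^ 2 + (θ t).2 ^ 2)) t :=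
  (hθ.2 t ht).fst

theorem hasDerivAt_snd (hθ : IsPlanarSol θ) (ht : 0 ≤ t) :
    HasDerivAt (fun s => (θ s).2) (-(θ t).2) t :=
  (hθ.2 t ht).snd

theorem hasDerivAt_fst_sq (hθ : IsPlanarSol θ) (ht : 0 ≤ t) :
    HasDerivAt (fun s => (θ s).1 ^ 2) (-(2 / √((θ t).1 ^ 2 + (θ t).2 ^ 2)) * (θ t).1 ^ 2) t :=
  ((hθ.hasDerivAt_fst ht).pow 2).congr_deriv (by norm_num; ring)

theorem snd_antitoneOn (hθ : IsPlanarSol θ) : AntitoneOn (fun t => (θ t).2) (Ici 0) :=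
  antitoneOn_Ici_of_hasDerivAt_nonpos (fun _ ht => hθ.hasDerivAt_snd ht)
    (fun _ ht => neg_nonpos.2 (hθ.snd_pos ht).le)

theorem fst_sq_antitoneOn (hθ : IsPlanarSol θ) : AntitoneOn (fun t => (θ t).1 ^ 2) (Ici 0) :=
  antitoneOn_Ici_of_hasDerivAt_nonpos (fun _ ht => hθ.hasDerivAt_fst_sq ht)
    (fun _ _ => mul_nonpos_of_nonpos_of_nonneg (neg_nonpos.2 (by positivity)) (sq_nonneg _))

theorem abs_fst_antitoneOn (hθ : IsPlanarSol θ) : AntitoneOn (fun t => |(θ t).1|) (Ici 0) :=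
  fun _ hs _ ht hst => sq_le_sq.1 (hθ.fst_sq_antitoneOn hs ht hst)

theorem tendsto_snd (hθ : IsPlanarSol θ) : Tendsto (fun t => (θ t).2) atTop (𝓝 0) :=
  tendsto_zero_of_hasDerivAt_le_neg_mul one_pos (fun _ ht => (hθ.snd_pos ht).le)
    (fun _ ht => hθ.hasDerivAt_snd ht) (fun _ _ => by rw [neg_one_mul])

theorem sqrt_fst_sq_add_snd_sq_le (hθ : IsPlanarSol θ) (ht : 0 ≤ t) :
    √((θ t).1 ^ 2 + (θ t).2 ^ 2) ≤ √((θ 0).1 ^ 2 + (θ 0).2 ^ 2) := by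
  have hy := hθ.snd_antitoneOn self_mem_Ici ht ht
  have hx := hθ.fst_sq_antitoneOn self_mem_Ici ht ht
  have := hθ.snd_pos ht
  exact sqrt_le_sqrt (by simp only at hx hy; nlinarith)

theorem tendsto_abs_fst (hθ : IsPlanarSol θ) : Tendsto (fun t => |(θ t).1|) atTop (𝓝 0) := by
  have hR : 0 < √((θ 0).1 ^ 2 + (θ 0).2 ^ 2) := by have := hθ.snd_pos le_rfl; positivity
  have hsq : Tendsto (fun t => (θ t).1 ^ 2) atTop (𝓝 0) := by
    refine tendsto_zero_of_hasDerivAt_le_neg_mul (div_pos two_pos hR)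
      (fun _ _ => sq_nonneg _) (fun _ ht => hθ.hasDerivAt_fst_sq ht) (fun t ht => ?_)
    have hr : 0 < √((θ t).1 ^ 2 + (θ t).2 ^ 2) := by have := hθ.snd_pos ht; positivity
    have := div_le_div_of_nonneg_left two_pos.le hr (hθ.sqrt_fst_sq_add_snd_sq_le ht)
    exact mul_le_mul_of_nonneg_right (neg_le_neg this) (sq_nonneg _)
  simpa only [sqrt_zero] using ((continuous_sqrt.tendsto 0).comp hsq).congr fun t =>
    sqrt_sq_eq_abs _

theorem tendsto_zero (hθ : IsPlanarSol θ) : Tendsto θ atTop (𝓝 (0, 0)) :=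
  ((tendsto_zero_iff_abs_tendsto_zero _).2 hθ.tendsto_abs_fst).prodMk_nhds hθ.tendsto_snd

theorem dist_zero_le (hθ : IsPlanarSol θ) (ht : 0 ≤ t) :
    dist (θ t) (0, 0) ≤ dist (θ 0) (0, 0) := by
  simp only [Prod.dist_eq, Real.dist_eq, sub_zero]
  refine max_le_max (hθ.abs_fst_antitoneOn self_mem_Ici ht ht) ?_
  rw [abs_of_pos (hθ.snd_pos ht), abs_of_pos (hθ.snd_pos le_rfl)]
  exact hθ.snd_antitoneOn self_mem_Ici ht ht

end IsPlanarSol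

theorem planarField_fst_ray (a : ℝ) {s : ℝ} (hs : 0 < s) :
    (planarField (a * s, s)).1 = -a / √(a ^ 2 + 1) := by
  have hsqrt : √((a * s) ^ 2 + s ^ 2) = s * √(a ^ 2 + 1) := by
    rw [show (a * s) ^ 2 + s ^ 2 = s ^ 2 * (a ^ 2 + 1) by ring, sqrt_mul (sq_nonneg s),
      sqrt_sq hs.le]
  rw [planarField, hsqrt, neg_mul_eq_neg_mul, mul_comm s, mul_div_mul_right _ _ hs.ne']

theorem tendsto_ray_nhdsWithin_upperHalf (a : ℝ) :
    Tendsto (fun s => (a * s, s)) (𝓝[>] 0) (𝓝[upperHalf] (0, 0)) := by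
  refine tendsto_nhdsWithin_iff.2 ⟨?_, eventually_mem_nhdsWithin⟩
  have h : Continuous fun s : ℝ => (a * s, s) := (continuous_const.mul continuous_id).prodMk
    continuous_id
  simpa using (h.tendsto 0).mono_left nhdsWithin_le_nhds

theorem not_exists_tendsto_planarField :
    ¬ ∃ L : ℝ × ℝ, Tendsto planarField (𝓝[upperHalf] (0, 0)) (𝓝 L) := by
  rintro ⟨L, hL⟩
  have ray_limit (a : ℝ) : L.1 = -a / √(a ^ 2 + 1) :=
    tendsto_nhds_unique ((continuous_fst.tendsto L).comp (hL.comp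
      (tendsto_ray_nhdsWithin_upperHalf a)))
      (tendsto_const_nhds.congr' (eventually_mem_nhdsWithin.mono fun _ hs =>
        (planarField_fst_ray a hs).symm))
  have h := (ray_limit 0).symm.trans (ray_limit 1)
  have : -1 / √(1 ^ 2 + 1) < (0 : ℝ) := div_neg_of_neg_of_pos neg_one_lt_zero (by positivity)
  simp only [neg_zero, zero_div] at h
  linarith

/-- For the ODE `θ₁' = −θ₁/√(θ₁²+θ₂²)`, `θ₂' = −θ₂` on `D = ℝ × ℝ₊`: along any solution
`|θ₁(t)|` and `θ₂(t)` are non-increasing and converge to `0`, the boundary point `(0,0)`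
is globally asymptotically stable (Lyapunov stable and globally attractive), but the
vector field has no limit at `(0,0)`. -/
theorem planar_example :
    -- monotone decrease of |θ₁| and θ₂, and convergence to 0
    (∀ θ : ℝ → ℝ × ℝ, IsPlanarSol θ →
      AntitoneOn (fun t => |(θ t).1|) (Ici (0 : ℝ)) ∧
      AntitoneOn (fun t => (θ t).2) (Ici (0 : ℝ)) ∧
      Tendsto (fun t => |(θ t).1|) atTop (nhds 0) ∧
      Tendsto (fun t => (θ t).2) atTop (nhds 0)) ∧
    -- Lyapunov stability of (0,0)
    (∀ ε : ℝ, 0 < ε → ∃ δ : ℝ, 0 < δ ∧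
      ∀ θ : ℝ → ℝ × ℝ, IsPlanarSol θ →
        θ 0 ∈ upperHalf ∩ closedBall (0, 0) δ →
        ∀ t : ℝ, 0 ≤ t → θ t ∈ upperHalf ∩ closedBall (0, 0) ε) ∧
    -- global attraction to (0,0)
    (∀ θ : ℝ → ℝ × ℝ, IsPlanarSol θ → Tendsto θ atTop (nhds ((0, 0) : ℝ × ℝ))) ∧
    -- the vector field has no limit at the origin
    ¬ ∃ L : ℝ × ℝ, Tendsto planarField (nhdsWithin (0, 0) upperHalf) (nhds L) :=
  ⟨fun _ hθ => ⟨hθ.abs_fst_antitoneOn, hθ.snd_antitoneOn, hθ.tendsto_abs_fst, hθ.tendsto_snd⟩,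
    fun ε hε => ⟨ε, hε, fun _ hθ h₀ t ht => ⟨hθ.1 t ht, (hθ.dist_zero_le ht).trans h₀.2⟩⟩,
    fun _ hθ => hθ.tendsto_zero,
    not_exists_tendsto_planarField⟩
end
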